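/- Let r > 1 be an integer, let φ be a discrete kernel and ψ a continuous kernel satisfying assumptions (i) and (ii), and suppose all the moments appearing below are finite. Then for every f ∈ W^{r,p}(ℝ) with 1 ≤ p < +∞ (or f ∈ C^r(ℝ) when p = +∞), every w > 0 and every x ∈ ℝ, the Taylor expansion of the operator holds: (D_w^{φ,ψ} f)(x) = f(x) + Σ_{k∈ℤ} φ(wx−k) · w ∫_ℝ ψ(wu−k) [ ∫_x^u (f^{(r)}(t)/(r−1)!) (u−t)^{r−1} dt ] du, i.e., all intermediate terms of orders 1,…,r−1 in the Taylor expansion with integral remainder cancel. -/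

import Mathlib

open MeasureTheory Filter Set
open scoped ENNReal BigOperators

/-- The Durrmeyer sampling operator based upon the kernels `φ` (discrete) and `ψ` (continuous). -/
noncomputable def durr (φ ψ : ℝ → ℝ) (w : ℝ) (f : ℝ → ℝ) (x : ℝ) : ℝ :=
  ∑' k : ℤ, φ (w * x - k) * (w * ∫ u : ℝ, ψ (w * u - k) * f u)

/-- A discrete kernel: bounded, integrable, with `∑_{k∈ℤ} φ(u-k) = 1` for all `u`. -/
structure IsDiscreteKernel (φ : ℝ → ℝ) : Prop where
  integrable : Integrable φ
  bounded : ∃ M : ℝ, ∀ x : ℝ, |φ x| ≤ M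
  partition : ∀ u : ℝ, HasSum (fun k : ℤ => φ (u - k)) 1

/-- A continuous kernel: integrable, bounded near `0`, with `∫ ψ = 1`. -/
structure IsContinuousKernel (ψ : ℝ → ℝ) : Prop where
  integrable : Integrable ψ
  boundedNearZero : ∃ δ : ℝ, 0 < δ ∧ ∃ M : ℝ, ∀ u : ℝ, |u| ≤ δ → |ψ u| ≤ M
  integral_one : (∫ u : ℝ, ψ u) = 1

/-- Discrete algebraic moment `m_ν(φ,u)`. -/
noncomputable def discMoment (φ : ℝ → ℝ) (ν : ℕ) (u : ℝ) : ℝ :=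
  ∑' k : ℤ, φ (u - k) * ((k : ℝ) - u) ^ ν

/-- Continuous algebraic moment `m̃_ν(ψ)`. -/
noncomputable def contMoment (ψ : ℝ → ℝ) (ν : ℕ) : ℝ :=
  ∫ u : ℝ, u ^ ν * ψ u

/-- Discrete absolute moment `M_ν(φ)` (of real order `ν`), valued in `ℝ≥0∞`. -/
noncomputable def discAbsMoment (φ : ℝ → ℝ) (ν : ℝ) : ℝ≥0∞ :=
  ⨆ u : ℝ, ∑' k : ℤ, ENNReal.ofReal (|φ (u - k)| * |u - (k : ℝ)| ^ ν)

/-- Continuous absolute moment `M̃_ν(ψ)` (of real order `ν`), valued in `ℝ≥0∞`. -/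
noncomputable def contAbsMoment (ψ : ℝ → ℝ) (ν : ℝ) : ℝ≥0∞ :=
  ∫⁻ u : ℝ, ENNReal.ofReal (|u| ^ ν * |ψ u|)

/-- Condition `(Θ)`: `ξ(u) = O(|u|^{-θ})` as `|u| → +∞`. -/
def CondTheta (ξ : ℝ → ℝ) (θ : ℝ) : Prop :=
  ∃ C R : ℝ, 0 < R ∧ ∀ u : ℝ, R ≤ |u| → |ξ u| ≤ C * |u| ^ (-θ)

/-- Assumption (i): the algebraic moments `m_ν(φ,u)`, `ν = 1,…,r`, do not depend on `u`. -/
def AssumptionI (φ : ℝ → ℝ) (r : ℕ) : Prop :=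
  ∀ ν : ℕ, 1 ≤ ν → ν ≤ r → ∀ u v : ℝ, discMoment φ ν u = discMoment φ ν v

/-- Assumption (ii) (Strang–Fix type / vanishing moment condition of Durrmeyer type). -/
def AssumptionII (φ ψ : ℝ → ℝ) (r : ℕ) : Prop :=
  ∀ i : ℕ, 1 ≤ i → i ≤ r - 1 →
    ∑ ν ∈ Finset.range (i + 1),
      (i.choose ν : ℝ) * discMoment φ (i - ν) 0 * contMoment ψ ν = 0

/-- The `L^p`-norm (`p ∈ [1,∞]`, as an extended nonneg real) of `f : ℝ → ℝ`. -/
noncomputable def lpN (p : ℝ≥0∞) (f : ℝ → ℝ) : ℝ≥0∞ := eLpNorm f p volume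

/-- The `r`-th modulus of smoothness `ω_r(f,δ)_p`. -/
noncomputable def modulus (r : ℕ) (p : ℝ≥0∞) (f : ℝ → ℝ) (δ : ℝ) : ℝ≥0∞ :=
  ⨆ t : {t : ℝ // |t| ≤ δ},
    lpN p (fun x => ∑ j ∈ Finset.range (r + 1),
      (-1 : ℝ) ^ (r - j) * (r.choose j : ℝ) * f (x + (j : ℝ) * (t : ℝ)))

/-- The generalized Lipschitz class `Lip*(α, L^p)`: `f ∈ L^p` with
`ω_{⌊α⌋+1}(f,δ)_p = O(δ^α)` as `δ → 0⁺`. -/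
def LipStar (α : ℝ) (p : ℝ≥0∞) (f : ℝ → ℝ) : Prop :=
  MemLp f p volume ∧
    ∃ C : ℝ, 0 < C ∧ ∃ δ₀ : ℝ, 0 < δ₀ ∧ ∀ δ : ℝ, 0 < δ → δ ≤ δ₀ →
      modulus (⌊α⌋₊ + 1) p f δ ≤ ENNReal.ofReal (C * δ ^ α)

/-- `‖D_w^{φ,ψ} f − f‖_p = O(w^{−β})` as `w → +∞`. -/
def durrBigO (φ ψ : ℝ → ℝ) (p : ℝ≥0∞) (f : ℝ → ℝ) (β : ℝ) : Prop :=
  ∃ C : ℝ, 0 < C ∧ ∃ W : ℝ, 0 < W ∧ ∀ w : ℝ, W ≤ w →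
    lpN p (fun x => durr φ ψ w f x - f x) ≤ ENNReal.ofReal (C * w ^ (-β))

/-- Membership in `C(ℝ)`: uniformly continuous and bounded. -/
def ContBdd (f : ℝ → ℝ) : Prop :=
  UniformContinuous f ∧ ∃ M : ℝ, ∀ x : ℝ, |f x| ≤ M

/-- Membership in the Sobolev space `W^{r,p}(ℝ)`. -/
def MemSobolev (r : ℕ) (p : ℝ≥0∞) (f : ℝ → ℝ) : Prop :=
  MemLp f p volume ∧ (∀ i < r, Differentiable ℝ (iteratedDeriv i f)) ∧
    MemLp (iteratedDeriv r f) p volume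

/-- Membership in `C^r(ℝ)`: `r`-fold differentiable with `f, f', …, f^{(r)}` in `C(ℝ)`. -/
def MemCr (r : ℕ) (f : ℝ → ℝ) : Prop :=
  (∀ i < r, Differentiable ℝ (iteratedDeriv i f)) ∧
    ∀ i ≤ r, ContBdd (iteratedDeriv i f)

/-!
Taylor's formula with integral remainder splits `f = P + R`, where `P` is the Taylor polynomial
of degree `r - 1` of `f` at `x` and `R` the remainder. Both pieces grow at most like
`(1 + |u - x|)^r`; for `R` this is because `f^{(r)} ∈ L^p` has `∫_I |f^{(r)}| ≤ C (1 + |I|)`.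
On such functions the integrals and series defining the operator converge absolutely, thanks to
the finite absolute moments, so the operator is additive there. On the monomial `(u - x)^i` it
equals `w^{-i} ∑_ν binom(i,ν) m_{i-ν}(φ) m̃_ν(ψ)`, which is `1` for `i = 0` and vanishes for
`1 ≤ i ≤ r - 1` by (i) and (ii). Hence the operator reproduces `P(x) = f(x)`, and what is left is
the operator applied to `R`.
-/

open scoped Interval

lemma ENNReal.rpow_le_one_add {a : ℝ≥0∞} {e : ℝ} (he₀ : 0 ≤ e) (he₁ : e ≤ 1) :
    a ^ e ≤ 1 + a := by
  rcases le_total a 1 with ha | ha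
  · exact (ENNReal.rpow_le_one ha he₀).trans le_self_add
  · calc a ^ e ≤ a ^ (1 : ℝ) := ENNReal.rpow_le_rpow_of_exponent_le ha he₁
      _ ≤ 1 + a := by rw [ENNReal.rpow_one]; exact le_add_self

/-- Hölder's inequality on `s`, followed by `μ s ^ (1 - 1/q) ≤ 1 + μ s`. -/
lemma setIntegral_norm_le_of_memLp {α : Type*} [MeasurableSpace α] {μ : Measure α} {g : α → ℝ}
    {q : ℝ≥0∞} (hq : 1 ≤ q) (hg : MemLp g q μ) {s : Set α} (hs : μ s ≠ ⊤) :
    ∫ t in s, ‖g t‖ ∂μ ≤ (eLpNorm g q μ).toReal * (1 + μ.real s) := by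
  have hexp₀ : 0 ≤ 1 / (1 : ℝ≥0∞).toReal - 1 / q.toReal := by
    rcases eq_or_ne q ⊤ with rfl | hq'
    · simp
    · simpa using one_div_le_one_div_of_le one_pos (ENNReal.toReal_mono hq' hq)
  have hexp₁ : 1 / (1 : ℝ≥0∞).toReal - 1 / q.toReal ≤ 1 := by
    simp only [ENNReal.toReal_one, div_one, sub_le_self_iff]; positivity
  have hL1 : eLpNorm g 1 (μ.restrict s) ≤ eLpNorm g q μ * (1 + μ s) :=
    calc eLpNorm g 1 (μ.restrict s)
        ≤ eLpNorm g q (μ.restrict s) * μ.restrict s Set.univ ^ _ :=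
          eLpNorm_le_eLpNorm_mul_rpow_measure_univ hq hg.aestronglyMeasurable.restrict
      _ ≤ eLpNorm g q μ * (1 + μ s) := by
          rw [Measure.restrict_apply_univ]
          exact mul_le_mul' (eLpNorm_mono_measure g Measure.restrict_le_self)
            (ENNReal.rpow_le_one_add hexp₀ hexp₁)
  rw [integral_norm_eq_lintegral_enorm hg.aestronglyMeasurable.restrict,
    ← eLpNorm_one_eq_lintegral_enorm]
  calc (eLpNorm g 1 (μ.restrict s)).toReal ≤ (eLpNorm g q μ * (1 + μ s)).toReal :=
        ENNReal.toReal_mono (by finiteness [hg.eLpNorm_ne_top]) hL1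
    _ = (eLpNorm g q μ).toReal * (1 + μ.real s) := by
        rw [ENNReal.toReal_mul, ENNReal.toReal_add ENNReal.one_ne_top hs, ENNReal.toReal_one,
          measureReal_def]

lemma MeasureTheory.MemLp.intervalIntegrable {g : ℝ → ℝ} {q : ℝ≥0∞} (hg : MemLp g q volume)
    (hq : 1 ≤ q) (a b : ℝ) : IntervalIntegrable g volume a b :=
  ((hg.locallyIntegrable hq).integrableOn_isCompact isCompact_uIcc).intervalIntegrable

lemma ContBdd.memLp_top {g : ℝ → ℝ} (hg : ContBdd g) : MemLp g ⊤ volume :=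
  let ⟨hu, M, hM⟩ := hg
  memLp_top_of_bound hu.continuous.aestronglyMeasurable M (ae_of_all _ hM)

noncomputable def taylorIntegralRemainder (f : ℝ → ℝ) (n : ℕ) (x u : ℝ) : ℝ :=
  ∫ t in x..u, iteratedDeriv (n + 1) f t / (n.factorial : ℝ) * (u - t) ^ n

section Taylor

variable {f : ℝ → ℝ} {n : ℕ} {x u : ℝ}

lemma taylorIntegralRemainder_zero (hd : Differentiable ℝ f)
    (hint : IntervalIntegrable (deriv f) volume x u) :
    taylorIntegralRemainder f 0 x u = f u - f x := by
  simpa [taylorIntegralRemainder] using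
    intervalIntegral.integral_deriv_eq_sub (fun t _ => hd t) hint

lemma hasDerivAt_neg_pow_sub_div_factorial (u t : ℝ) (n : ℕ) :
    HasDerivAt (fun s => -((u - s) ^ (n + 1) / ((n + 1).factorial : ℝ)))
      ((u - t) ^ n / (n.factorial : ℝ)) t := by
  refine ((((hasDerivAt_id t).const_sub u).pow (n + 1)).div_const _).fun_neg.congr_deriv ?_
  rw [Nat.factorial_succ, Nat.cast_mul]
  field_simp
  simp

lemma taylorIntegralRemainder_eq_add_succ (hd : Differentiable ℝ (iteratedDeriv (n + 1) f))
    (hint : IntervalIntegrable (iteratedDeriv (n + 2) f) volume x u) :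
    taylorIntegralRemainder f n x u =
      iteratedDeriv (n + 1) f x / ((n + 1).factorial : ℝ) * (u - x) ^ (n + 1) +
        taylorIntegralRemainder f (n + 1) x u := by
  have hparts := intervalIntegral.integral_mul_deriv_eq_deriv_mul
    (fun t _ => by rw [iteratedDeriv_succ]; exact (hd t).hasDerivAt)
    (fun t _ => hasDerivAt_neg_pow_sub_div_factorial u t n) hint
    ((by fun_prop : Continuous fun t : ℝ => (u - t) ^ n / (n.factorial : ℝ)).intervalIntegrable
      x u)
  simp only [sub_self, zero_pow n.succ_ne_zero, zero_div, neg_zero, mul_zero, mul_neg,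
    intervalIntegral.integral_neg, sub_neg_eq_add] at hparts
  simp only [taylorIntegralRemainder, div_mul_eq_mul_div, mul_div_assoc]
  rw [hparts]
  ring

theorem eq_sum_add_taylorIntegralRemainder (hd : ∀ i ≤ n, Differentiable ℝ (iteratedDeriv i f))
    (hint : IntervalIntegrable (iteratedDeriv (n + 1) f) volume x u) :
    f u = ∑ i ∈ Finset.range (n + 1), iteratedDeriv i f x / (i.factorial : ℝ) * (u - x) ^ i +
      taylorIntegralRemainder f n x u := by
  induction n with
  | zero =>
    rw [taylorIntegralRemainder_zero (by simpa using hd 0 le_rfl) (by simpa using hint)]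
    simp
  | succ n ih =>
    have hcont : Continuous (iteratedDeriv (n + 1) f) := (hd (n + 1) le_rfl).continuous
    rw [ih (fun i hi => hd i (by omega)) (hcont.intervalIntegrable x u),
      taylorIntegralRemainder_eq_add_succ (hd (n + 1) le_rfl) hint,
      Finset.sum_range_succ _ (n + 1)]
    ring

lemma abs_taylorIntegralRemainder_le
    (hint : IntervalIntegrable (iteratedDeriv (n + 1) f) volume x u) :
    |taylorIntegralRemainder f n x u| ≤
      (∫ t in Ι x u, |iteratedDeriv (n + 1) f t|) * |u - x| ^ n := by
  have hF : IntervalIntegrable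
      (fun t => iteratedDeriv (n + 1) f t / (n.factorial : ℝ) * (u - t) ^ n) volume x u :=
    (hint.div_const _).mul_continuousOn (by fun_prop)
  have hfac : (1 : ℝ) ≤ n.factorial := mod_cast n.factorial_pos
  calc |taylorIntegralRemainder f n x u|
      ≤ ∫ t in Ι x u, ‖iteratedDeriv (n + 1) f t / (n.factorial : ℝ) * (u - t) ^ n‖ :=
        (Real.norm_eq_abs _).symm.trans_le intervalIntegral.norm_integral_le_integral_norm_uIoc
    _ ≤ ∫ t in Ι x u, |iteratedDeriv (n + 1) f t| * |u - x| ^ n := by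
        refine setIntegral_mono_on (intervalIntegrable_iff.1 hF).norm
          ((intervalIntegrable_iff.1 hint).abs.mul_const _) measurableSet_uIoc fun t ht => ?_
        rw [Real.norm_eq_abs, abs_mul, abs_div, abs_pow, Nat.abs_cast]
        exact mul_le_mul (div_le_self (abs_nonneg _) hfac)
          (pow_le_pow_left₀ (abs_nonneg _) (abs_sub_right_of_mem_uIcc (uIoc_subset_uIcc ht)) n)
          (by positivity) (abs_nonneg _)
    _ = (∫ t in Ι x u, |iteratedDeriv (n + 1) f t|) * |u - x| ^ n := integral_mul_const _ _

lemma exists_abs_taylorIntegralRemainder_le_of_memLp {q : ℝ≥0∞} (hq : 1 ≤ q)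
    (hg : MemLp (iteratedDeriv (n + 1) f) q volume) (x : ℝ) :
    ∃ C, ∀ u, |taylorIntegralRemainder f n x u| ≤ C * (1 + |u - x|) ^ (n + 1) := by
  set C := (eLpNorm (iteratedDeriv (n + 1) f) q volume).toReal
  refine ⟨C, fun u => ?_⟩
  have hvol : volume.real (Ι x u) = |u - x| := by
    rw [measureReal_def, Real.volume_uIoc, ENNReal.toReal_ofReal (abs_nonneg _)]
  calc |taylorIntegralRemainder f n x u|
      ≤ (∫ t in Ι x u, |iteratedDeriv (n + 1) f t|) * |u - x| ^ n :=
        abs_taylorIntegralRemainder_le (hg.intervalIntegrable hq x u)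
    _ ≤ (C * (1 + |u - x|)) * (1 + |u - x|) ^ n := by
        gcongr
        · rw [← hvol]
          exact setIntegral_norm_le_of_memLp hq hg (by simp [Real.volume_uIoc])
        · linarith [abs_nonneg (u - x)]
    _ = C * (1 + |u - x|) ^ (n + 1) := by ring

end Taylor

def PolyGrowth (r : ℕ) (x : ℝ) (h : ℝ → ℝ) : Prop :=
  AEStronglyMeasurable h ∧ ∃ C, ∀ u, |h u| ≤ C * (1 + |u - x|) ^ r

namespace PolyGrowth

variable {r : ℕ} {x : ℝ} {h h₁ h₂ : ℝ → ℝ}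

lemma add (h₁g : PolyGrowth r x h₁) (h₂g : PolyGrowth r x h₂) :
    PolyGrowth r x (fun u => h₁ u + h₂ u) := by
  obtain ⟨hm₁, C₁, hC₁⟩ := h₁g
  obtain ⟨hm₂, C₂, hC₂⟩ := h₂g
  refine ⟨hm₁.add hm₂, C₁ + C₂, fun u => ?_⟩
  calc |h₁ u + h₂ u| ≤ |h₁ u| + |h₂ u| := abs_add_le _ _
    _ ≤ (C₁ + C₂) * (1 + |u - x|) ^ r := by linarith [hC₁ u, hC₂ u]

lemma const_mul (hg : PolyGrowth r x h) (c : ℝ) : PolyGrowth r x (fun u => c * h u) := by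
  obtain ⟨hm, C, hC⟩ := hg
  refine ⟨hm.const_mul c, |c| * C, fun u => ?_⟩
  rw [abs_mul, mul_assoc]
  exact mul_le_mul_of_nonneg_left (hC u) (abs_nonneg c)

lemma finset_sum {ι : Type*} (s : Finset ι) {h : ι → ℝ → ℝ}
    (hg : ∀ i ∈ s, PolyGrowth r x (h i)) : PolyGrowth r x (fun u => ∑ i ∈ s, h i u) := by
  classical
  induction s using Finset.induction_on with
  | empty => exact ⟨aestronglyMeasurable_const, 0, fun u => by simp⟩
  | insert i s hi ih =>
    simp only [Finset.sum_insert hi]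
    exact (hg i (Finset.mem_insert_self i s)).add
      (ih fun j hj => hg j (Finset.mem_insert_of_mem hj))

end PolyGrowth

lemma polyGrowth_pow_sub {r i : ℕ} (hi : i ≤ r) (x : ℝ) :
    PolyGrowth r x (fun u => (u - x) ^ i) := by
  refine ⟨(by fun_prop : Continuous fun u : ℝ => (u - x) ^ i).aestronglyMeasurable, 1,
    fun u => ?_⟩
  rw [abs_pow, one_mul]
  calc |u - x| ^ i ≤ (1 + |u - x|) ^ i := by gcongr; linarith
    _ ≤ (1 + |u - x|) ^ r := pow_le_pow_right₀ (by linarith [abs_nonneg (u - x)]) hi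

lemma mul_integral_comp_mul_sub (g : ℝ → ℝ) {w : ℝ} (hw : 0 < w) (s : ℝ) :
    w * ∫ u, g (w * u - s) = ∫ v, g v := by
  rw [Measure.integral_comp_mul_left (fun v => g (v - s)) w, integral_sub_right_eq_self g s,
    abs_of_pos (inv_pos.2 hw), smul_eq_mul, mul_inv_cancel_left₀ hw.ne']

lemma one_add_abs_sub_le {w : ℝ} (hw : 0 < w) (u x s : ℝ) :
    1 + |u - x| ≤ (1 + w⁻¹) * ((1 + |w * u - s|) * (1 + |w * x - s|)) := by
  have hw' := inv_pos.2 hw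
  have hux : |u - x| ≤ w⁻¹ * (|w * u - s| + |w * x - s|) := by
    rw [show u - x = w⁻¹ * ((w * u - s) - (w * x - s)) by field_simp; ring, abs_mul,
      abs_of_pos hw']
    exact mul_le_mul_of_nonneg_left (abs_sub _ _) hw'.le
  have hprod := mul_nonneg (abs_nonneg (w * u - s)) (abs_nonneg (w * x - s))
  nlinarith [abs_nonneg (w * u - s), abs_nonneg (w * x - s), mul_nonneg hw'.le hprod]

section Durrmeyer

variable {φ ψ : ℝ → ℝ} {r : ℕ} {w x : ℝ} {h h₁ h₂ : ℝ → ℝ}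

lemma abs_comp_mul_sub_mul_le (hw : 0 < w) {C : ℝ} (hC : ∀ u, |h u| ≤ C * (1 + |u - x|) ^ r)
    (s u : ℝ) :
    |ψ (w * u - s) * h u| ≤ C * ((1 + w⁻¹) * (1 + |w * x - s|)) ^ r *
      (|ψ (w * u - s)| * (1 + |w * u - s|) ^ r) := by
  have hC₀ : 0 ≤ C := by simpa using (abs_nonneg (h x)).trans (hC x)
  calc |ψ (w * u - s) * h u| ≤ |ψ (w * u - s)| * (C * (1 + |u - x|) ^ r) := by
        rw [abs_mul]; exact mul_le_mul_of_nonneg_left (hC u) (abs_nonneg _)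
    _ ≤ |ψ (w * u - s)| *
          (C * ((1 + w⁻¹) * ((1 + |w * u - s|) * (1 + |w * x - s|))) ^ r) := by
        refine mul_le_mul_of_nonneg_left (mul_le_mul_of_nonneg_left ?_ hC₀) (abs_nonneg _)
        exact pow_le_pow_left₀ (by positivity) (one_add_abs_sub_le hw u x s) r
    _ = _ := by rw [mul_pow, mul_pow, mul_pow]; ring

lemma PolyGrowth.integrable_comp_mul_sub_mul (hh : PolyGrowth r x h) (hψ : Integrable ψ)
    (hρ : Integrable fun v => |ψ v| * (1 + |v|) ^ r) (hw : 0 < w) (s : ℝ) :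
    Integrable fun u => ψ (w * u - s) * h u := by
  obtain ⟨hm, C, hC⟩ := hh
  exact (((hρ.comp_sub_right s).comp_mul_left' hw.ne').const_mul _).mono'
    (((hψ.comp_sub_right s).comp_mul_left' hw.ne').aestronglyMeasurable.mul hm)
    (ae_of_all _ fun u => abs_comp_mul_sub_mul_le hw hC s u)

lemma PolyGrowth.exists_abs_mul_integral_le (hh : PolyGrowth r x h)
    (hρ : Integrable fun v => |ψ v| * (1 + |v|) ^ r) (hw : 0 < w) :
    ∃ C, ∀ s, |w * ∫ u, ψ (w * u - s) * h u| ≤ C * (1 + |w * x - s|) ^ r := by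
  obtain ⟨-, C, hC⟩ := hh
  refine ⟨C * (1 + w⁻¹) ^ r * ∫ v, |ψ v| * (1 + |v|) ^ r, fun s => ?_⟩
  calc |w * ∫ u, ψ (w * u - s) * h u| = w * ‖∫ u, ψ (w * u - s) * h u‖ := by
        rw [abs_mul, abs_of_pos hw, Real.norm_eq_abs]
    _ ≤ w * ∫ u, C * ((1 + w⁻¹) * (1 + |w * x - s|)) ^ r *
          (|ψ (w * u - s)| * (1 + |w * u - s|) ^ r) := by
        gcongr
        exact norm_integral_le_of_norm_le
          (((hρ.comp_sub_right s).comp_mul_left' hw.ne').const_mul _)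
          (ae_of_all _ fun u => abs_comp_mul_sub_mul_le hw hC s u)
    _ = C * ((1 + w⁻¹) * (1 + |w * x - s|)) ^ r * ∫ v, |ψ v| * (1 + |v|) ^ r := by
        rw [integral_const_mul, mul_left_comm,
          mul_integral_comp_mul_sub (fun v => |ψ v| * (1 + |v|) ^ r) hw]
    _ = C * (1 + w⁻¹) ^ r * (∫ v, |ψ v| * (1 + |v|) ^ r) * (1 + |w * x - s|) ^ r := by
        rw [mul_pow]; ring

lemma PolyGrowth.summable_durr (hh : PolyGrowth r x h)
    (hρ : Integrable fun v => |ψ v| * (1 + |v|) ^ r) (hw : 0 < w)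
    (hσ : Summable fun k : ℤ => |φ (w * x - k)| * (1 + |w * x - k|) ^ r) :
    Summable fun k : ℤ => φ (w * x - k) * (w * ∫ u, ψ (w * u - k) * h u) := by
  obtain ⟨C, hC⟩ := hh.exists_abs_mul_integral_le hρ hw
  refine (hσ.mul_left C).of_norm_bounded fun k => ?_
  rw [Real.norm_eq_abs, abs_mul, mul_left_comm]
  exact mul_le_mul_of_nonneg_left (hC k) (abs_nonneg _)

lemma durr_add (hψ : Integrable ψ) (hρ : Integrable fun v => |ψ v| * (1 + |v|) ^ r) (hw : 0 < w)
    (hσ : Summable fun k : ℤ => |φ (w * x - k)| * (1 + |w * x - k|) ^ r)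
    (h₁g : PolyGrowth r x h₁) (h₂g : PolyGrowth r x h₂) :
    durr φ ψ w (fun u => h₁ u + h₂ u) x = durr φ ψ w h₁ x + durr φ ψ w h₂ x := by
  unfold durr
  rw [← (h₁g.summable_durr hρ hw hσ).tsum_add (h₂g.summable_durr hρ hw hσ)]
  refine tsum_congr fun k => ?_
  simp only [mul_add]
  rw [integral_add (h₁g.integrable_comp_mul_sub_mul hψ hρ hw k)
    (h₂g.integrable_comp_mul_sub_mul hψ hρ hw k), mul_add, mul_add]

lemma durr_const_mul (c : ℝ) : durr φ ψ w (fun u => c * h u) x = c * durr φ ψ w h x := by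
  unfold durr
  simp only [mul_left_comm _ c, integral_const_mul]
  exact tsum_mul_left

lemma durr_finset_sum {ι : Type*} (s : Finset ι) {h : ι → ℝ → ℝ} (hψ : Integrable ψ)
    (hρ : Integrable fun v => |ψ v| * (1 + |v|) ^ r) (hw : 0 < w)
    (hσ : Summable fun k : ℤ => |φ (w * x - k)| * (1 + |w * x - k|) ^ r)
    (hg : ∀ i ∈ s, PolyGrowth r x (h i)) :
    durr φ ψ w (fun u => ∑ i ∈ s, h i u) x = ∑ i ∈ s, durr φ ψ w (h i) x := by
  classical
  induction s using Finset.induction_on with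
  | empty => simp [durr]
  | insert i s hi ih =>
    have hs : ∀ j ∈ s, PolyGrowth r x (h j) := fun j hj => hg j (Finset.mem_insert_of_mem hj)
    simp only [Finset.sum_insert hi]
    rw [durr_add hψ hρ hw hσ (hg i (Finset.mem_insert_self i s)) (PolyGrowth.finset_sum s hs),
      ih hs]

end Durrmeyer

section Moments

variable {φ ψ : ℝ → ℝ} {i : ℕ} {w x : ℝ}

lemma integral_mul_add_pow (hmom : ∀ ν ≤ i, Integrable fun v => v ^ ν * ψ v) (d : ℝ) :
    ∫ v, ψ v * (v + d) ^ i =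
      ∑ ν ∈ Finset.range (i + 1), (i.choose ν : ℝ) * d ^ (i - ν) * contMoment ψ ν := by
  have hint : ∀ ν ∈ Finset.range (i + 1),
      Integrable fun v => (i.choose ν : ℝ) * d ^ (i - ν) * (v ^ ν * ψ v) := fun ν hν =>
    (hmom ν (Nat.lt_succ_iff.1 (Finset.mem_range.1 hν))).const_mul _
  have hexpand : ∀ v, ψ v * (v + d) ^ i =
      ∑ ν ∈ Finset.range (i + 1), (i.choose ν : ℝ) * d ^ (i - ν) * (v ^ ν * ψ v) := fun v => by
    rw [add_pow, Finset.mul_sum]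
    exact Finset.sum_congr rfl fun ν _ => by ring
  simp only [hexpand, integral_finsetSum _ hint, integral_const_mul, contMoment]

lemma mul_integral_comp_mul_sub_mul_pow (hmom : ∀ ν ≤ i, Integrable fun v => v ^ ν * ψ v)
    (hw : 0 < w) (s : ℝ) :
    w * ∫ u, ψ (w * u - s) * (u - x) ^ i =
      (w⁻¹) ^ i * ∑ ν ∈ Finset.range (i + 1),
        (i.choose ν : ℝ) * (s - w * x) ^ (i - ν) * contMoment ψ ν := by
  have hsub : ∀ u, ψ (w * u - s) * (u - x) ^ i =
      (fun v => (w⁻¹) ^ i * (ψ v * (v + (s - w * x)) ^ i)) (w * u - s) := fun u => by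
    beta_reduce
    rw [← mul_left_comm, ← mul_pow]
    congr 2
    field_simp
    ring
  rw [integral_congr_ae (ae_of_all _ hsub),
    mul_integral_comp_mul_sub (fun v => (w⁻¹) ^ i * (ψ v * (v + (s - w * x)) ^ i)) hw,
    integral_const_mul, integral_mul_add_pow hmom]

lemma durr_pow_sub (hmom : ∀ ν ≤ i, Integrable fun v => v ^ ν * ψ v)
    (hφ : ∀ j ≤ i, Summable fun k : ℤ => φ (w * x - k) * ((k : ℝ) - w * x) ^ j) (hw : 0 < w) :
    durr φ ψ w (fun u => (u - x) ^ i) x = (w⁻¹) ^ i *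
      ∑ ν ∈ Finset.range (i + 1),
        (i.choose ν : ℝ) * discMoment φ (i - ν) (w * x) * contMoment ψ ν := by
  have hterm : ∀ k : ℤ, φ (w * x - k) * (w * ∫ u, ψ (w * u - k) * (u - x) ^ i) =
      (w⁻¹) ^ i * ∑ ν ∈ Finset.range (i + 1), (i.choose ν : ℝ) * contMoment ψ ν *
        (φ (w * x - k) * ((k : ℝ) - w * x) ^ (i - ν)) := fun k => by
    rw [mul_integral_comp_mul_sub_mul_pow hmom hw, mul_left_comm, Finset.mul_sum]
    exact congrArg _ (Finset.sum_congr rfl fun ν _ => by ring)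
  rw [durr, tsum_congr hterm, tsum_mul_left, Summable.tsum_finsetSum fun ν hν =>
    (hφ _ (Nat.sub_le i ν)).mul_left _]
  simp only [tsum_mul_left, discMoment]
  exact congrArg _ (Finset.sum_congr rfl fun ν _ => by ring)

end Moments

section Kernels

variable {φ ψ : ℝ → ℝ} {ν r : ℕ}

lemma summable_abs_mul_abs_pow_of_discAbsMoment_lt_top (h : discAbsMoment φ ν < ⊤) (y : ℝ) :
    Summable fun k : ℤ => |φ (y - k)| * |y - k| ^ ν := by
  have hle : ∑' k : ℤ, ENNReal.ofReal (|φ (y - k)| * |y - k| ^ ν) ≤ discAbsMoment φ ν := by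
    simp only [discAbsMoment, Real.rpow_natCast]
    exact le_iSup (fun u : ℝ => ∑' k : ℤ, ENNReal.ofReal (|φ (u - k)| * |u - k| ^ ν)) y
  exact (ENNReal.summable_toReal (hle.trans_lt h).ne).congr fun k =>
    ENNReal.toReal_ofReal (by positivity)

lemma integrable_abs_pow_mul_abs_of_contAbsMoment_lt_top (hψ : AEStronglyMeasurable ψ)
    (h : contAbsMoment ψ ν < ⊤) : Integrable fun v => |v| ^ ν * |ψ v| := by
  refine ⟨(continuous_abs.pow ν).aestronglyMeasurable.mul hψ.norm, ?_⟩
  rw [hasFiniteIntegral_iff_ofReal (ae_of_all _ fun v => by positivity)]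
  simpa only [contAbsMoment, Real.rpow_natCast] using h

lemma summable_mul_sub_pow_of_discAbsMoment_lt_top (h : discAbsMoment φ ν < ⊤) (y : ℝ) :
    Summable fun k : ℤ => φ (y - k) * ((k : ℝ) - y) ^ ν :=
  (summable_abs_mul_abs_pow_of_discAbsMoment_lt_top h y).of_norm_bounded fun k => by
    rw [Real.norm_eq_abs, abs_mul, abs_pow, abs_sub_comm]

lemma integrable_pow_mul_of_contAbsMoment_lt_top (hψ : AEStronglyMeasurable ψ)
    (h : contAbsMoment ψ ν < ⊤) : Integrable fun v => v ^ ν * ψ v :=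
  (integrable_abs_pow_mul_abs_of_contAbsMoment_lt_top hψ h).mono'
    ((continuous_pow ν).aestronglyMeasurable.mul hψ)
    (ae_of_all _ fun v => by rw [Real.norm_eq_abs, abs_mul, abs_pow])

lemma abs_mul_one_add_abs_pow_le (a t : ℝ) (r : ℕ) :
    |a| * (1 + |t|) ^ r ≤ 2 ^ (r - 1) * (|a| + |a| * |t| ^ r) := by
  have := add_pow_le zero_le_one (abs_nonneg t) r
  rw [one_pow] at this
  nlinarith [abs_nonneg a]

lemma summable_abs_mul_one_add_abs_pow (h₀ : discAbsMoment φ 0 < ⊤) (hr : discAbsMoment φ r < ⊤)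
    (y : ℝ) : Summable fun k : ℤ => |φ (y - k)| * (1 + |y - k|) ^ r := by
  have h₀' := summable_abs_mul_abs_pow_of_discAbsMoment_lt_top (ν := 0) (by simpa using h₀) y
  simp only [pow_zero, mul_one] at h₀'
  have hr' := summable_abs_mul_abs_pow_of_discAbsMoment_lt_top hr y
  exact ((h₀'.add hr').mul_left _).of_nonneg_of_le (fun k => by positivity)
    fun k => abs_mul_one_add_abs_pow_le _ _ r

lemma integrable_abs_mul_one_add_abs_pow (hψ : Integrable ψ) (hr : contAbsMoment ψ r < ⊤) :
    Integrable fun v => |ψ v| * (1 + |v|) ^ r := by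
  have hr' := integrable_abs_pow_mul_abs_of_contAbsMoment_lt_top hψ.aestronglyMeasurable hr
  have hweight : Continuous fun v : ℝ => (1 + |v|) ^ r := by fun_prop
  refine ((hψ.abs.add hr').const_mul (2 ^ (r - 1))).mono'
    (hψ.aestronglyMeasurable.norm.mul hweight.aestronglyMeasurable) (ae_of_all _ fun v => ?_)
  rw [Real.norm_eq_abs, abs_of_nonneg (by positivity), Pi.add_apply, mul_comm (|v| ^ r)]
  exact abs_mul_one_add_abs_pow_le _ _ r

lemma IsDiscreteKernel.discMoment_zero (hφ : IsDiscreteKernel φ) (u : ℝ) :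
    discMoment φ 0 u = 1 := by
  simpa [discMoment] using (hφ.partition u).tsum_eq

lemma IsContinuousKernel.contMoment_zero (hψ : IsContinuousKernel ψ) : contMoment ψ 0 = 1 := by
  simpa [contMoment] using hψ.integral_one

lemma sum_choose_mul_discMoment_mul_contMoment (hφ : IsDiscreteKernel φ)
    (hψ : IsContinuousKernel ψ) (hi : AssumptionI φ r) (hii : AssumptionII φ ψ r) {i : ℕ}
    (hir : i < r) (y : ℝ) :
    ∑ ν ∈ Finset.range (i + 1), (i.choose ν : ℝ) * discMoment φ (i - ν) y * contMoment ψ ν =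
      if i = 0 then 1 else 0 := by
  split_ifs with hi0
  · simp [hi0, hφ.discMoment_zero, hψ.contMoment_zero]
  · rw [← hii i (Nat.one_le_iff_ne_zero.2 hi0) (by omega)]
    refine Finset.sum_congr rfl fun ν hν => ?_
    rcases Nat.eq_zero_or_pos (i - ν) with h | h
    · rw [h, hφ.discMoment_zero, hφ.discMoment_zero]
    · rw [hi (i - ν) h (by omega) y 0]

end Kernels

lemma durr_sum_mul_pow_sub {φ ψ : ℝ → ℝ} {n : ℕ} (hφ : IsDiscreteKernel φ)
    (hψ : IsContinuousKernel ψ) (hi : AssumptionI φ (n + 1)) (hii : AssumptionII φ ψ (n + 1))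
    (hMφ : ∀ ν : ℕ, ν ≤ n + 1 → discAbsMoment φ (ν : ℝ) < ⊤)
    (hMψ : ∀ ν : ℕ, ν ≤ n + 1 → contAbsMoment ψ (ν : ℝ) < ⊤) {w : ℝ} (hw : 0 < w)
    (c : ℕ → ℝ) (x : ℝ) :
    durr φ ψ w (fun u => ∑ i ∈ Finset.range (n + 1), c i * (u - x) ^ i) x = c 0 := by
  have hmom : ∀ i < n + 1, ∀ ν ≤ i, Integrable fun v => v ^ ν * ψ v := fun i hi ν hν =>
    integrable_pow_mul_of_contAbsMoment_lt_top hψ.integrable.aestronglyMeasurable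
      (hMψ ν (by omega))
  have hφsum : ∀ i < n + 1, ∀ j ≤ i,
      Summable fun k : ℤ => φ (w * x - k) * ((k : ℝ) - w * x) ^ j := fun i hi j hj =>
    summable_mul_sub_pow_of_discAbsMoment_lt_top (hMφ j (by omega)) _
  have hterm : ∀ i ∈ Finset.range (n + 1),
      durr φ ψ w (fun u => c i * (u - x) ^ i) x = if i = 0 then c 0 else 0 := fun i hir => by
    rw [Finset.mem_range] at hir
    rw [durr_const_mul, durr_pow_sub (hmom i hir) (hφsum i hir) hw,
      sum_choose_mul_discMoment_mul_contMoment hφ hψ hi hii hir]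
    split_ifs with hi0
    · simp [hi0]
    · simp
  rw [durr_finset_sum _ hψ.integrable
    (integrable_abs_mul_one_add_abs_pow hψ.integrable (hMψ _ le_rfl)) hw
    (summable_abs_mul_one_add_abs_pow (by simpa using hMφ 0 (Nat.zero_le _)) (hMφ _ le_rfl) _)
    fun i hi => (polyGrowth_pow_sub (Finset.mem_range.1 hi).le x).const_mul _]
  simp [Finset.sum_congr rfl hterm]

/-- Taylor expansion of the Durrmeyer sampling operators: under
assumptions (i) and (ii), all intermediate terms cancel and only the integral remainder
survives. -/
theorem durr_taylor_expansion (r : ℕ) (hr : 1 < r) (φ ψ : ℝ → ℝ)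
    (hφ : IsDiscreteKernel φ) (hψ : IsContinuousKernel ψ)
    (hi : AssumptionI φ r) (hii : AssumptionII φ ψ r)
    (hMφ : ∀ ν : ℕ, ν ≤ r → discAbsMoment φ (ν : ℝ) < ⊤)
    (hMψ : ∀ ν : ℕ, ν ≤ r → contAbsMoment ψ (ν : ℝ) < ⊤)
    (p : ℝ≥0∞) (hp : 1 ≤ p) (f : ℝ → ℝ)
    (hf : (p ≠ ⊤ ∧ MemSobolev r p f) ∨ (p = ⊤ ∧ MemCr r f))
    (w : ℝ) (hw : 0 < w) (x : ℝ) :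
    durr φ ψ w f x = f x + ∑' k : ℤ, φ (w * x - k) *
      (w * ∫ u : ℝ, ψ (w * u - k) *
        (∫ t in x..u, iteratedDeriv r f t / (Nat.factorial (r - 1) : ℝ) * (u - t) ^ (r - 1))) := by
  obtain ⟨n, rfl⟩ : ∃ n, r = n + 1 := ⟨r - 1, by omega⟩
  have hd : ∀ i < n + 1, Differentiable ℝ (iteratedDeriv i f) := hf.elim (·.2.2.1) (·.2.1)
  have hg : MemLp (iteratedDeriv (n + 1) f) p volume :=
    hf.elim (·.2.2.2) fun ⟨hp, hCr⟩ => hp ▸ (hCr.2 _ le_rfl).memLp_top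
  set P := fun u => ∑ i ∈ Finset.range (n + 1),
    iteratedDeriv i f x / (i.factorial : ℝ) * (u - x) ^ i
  set R := taylorIntegralRemainder f n x
  have htaylor : ∀ u, f u = P u + R u := fun u =>
    eq_sum_add_taylorIntegralRemainder (fun i hi => hd i (by omega)) (hg.intervalIntegrable hp x u)
  have hP : PolyGrowth (n + 1) x P := PolyGrowth.finset_sum _ fun i hi =>
    (polyGrowth_pow_sub (Finset.mem_range.1 hi).le x).const_mul _
  have hR : PolyGrowth (n + 1) x R :=
    ⟨((hd 0 n.succ_pos).continuous.aestronglyMeasurable.sub hP.1).congr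
      (ae_of_all _ fun u => by simp [htaylor u]),
    exists_abs_taylorIntegralRemainder_le_of_memLp hp hg x⟩
  have hρ := integrable_abs_mul_one_add_abs_pow hψ.integrable (hMψ _ le_rfl)
  have hσ := summable_abs_mul_one_add_abs_pow (by simpa using hMφ 0 (Nat.zero_le _))
    (hMφ _ le_rfl) (w * x)
  calc durr φ ψ w f x = durr φ ψ w (fun u => P u + R u) x := by simp only [← htaylor]
    _ = durr φ ψ w P x + durr φ ψ w R x := durr_add hψ.integrable hρ hw hσ hP hR
    _ = f x + durr φ ψ w R x := by
      rw [durr_sum_mul_pow_sub hφ hψ hi hii hMφ hMψ hw]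
      simp
    _ = _ := by simp only [R, taylorIntegralRemainder, durr, Nat.add_sub_cancel]
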